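/- arXiv:2306.13184 — 4 statements merged into one kernel-verified Lean document; each statement's English description precedes it below -/
import Mathlib

section
/- Let W be independent of (X,Y). If a random variable U satisfies I(U;X) = ε and H(Y|U,X,W) = 0, then H(U) ≥ H(Y|X) − H(X|Y) + ε. -/
/-- Shannon entropy (base 2) of a finitely supported distribution given as a function. -/
noncomputable def ent {α : Type*} [Fintype α] (q : α → ℝ) : ℝ :=
  - ∑ a, q a * Real.logb 2 (q a)

/-!
Since `I(U;X) = H(U) + H(X) - H(X,U)`, the claim is `H(Y) ≤ H(X,U)`. As `Y` is a function of
`(X,W,U)`, `H(X,Y,W,U) = H(X,W,U) ≤ H(X,U) + H(W)` by subadditivity; on the other hand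
`H(X,Y,W,U) ≥ H(Y,W)`, and `H(Y,W) = H(Y) + H(W)` because `W` is independent of `Y`.
-/

open Finset Real

section
variable {α β γ δ : Type*} [Fintype α] [Fintype β] [Fintype γ] [Fintype δ]

theorem ent_comp_equiv (e : α ≃ β) (q : β → ℝ) : ent (q ∘ e) = ent q := by
  unfold ent
  exact congrArg Neg.neg (e.sum_comp fun b => q b * logb 2 (q b))

def IsPushforward (q : α → ℝ) (f : α → β) (m : β → ℝ) : Prop :=
  ∀ g : β → ℝ, ∑ a, q a * g (f a) = ∑ b, m b * g b

namespace IsPushforward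

variable {q : α → ℝ} {f : α → β} {m : β → ℝ}

theorem sum_eq (h : IsPushforward q f m) : ∑ a, q a = ∑ b, m b := by
  simpa using h 1

open Classical in
theorem apply_eq (h : IsPushforward q f m) (b : β) :
    m b = ∑ a, q a * if f a = b then 1 else 0 := by
  rw [h fun b' => if b' = b then 1 else 0]
  simp

theorem nonneg (h : IsPushforward q f m) (hq : ∀ a, 0 ≤ q a) (b : β) : 0 ≤ m b := by
  classical
  rw [h.apply_eq]
  exact sum_nonneg fun a _ => mul_nonneg (hq a) (by split_ifs <;> norm_num)

theorem le_apply_comp (h : IsPushforward q f m) (hq : ∀ a, 0 ≤ q a) (a : α) : q a ≤ m (f a) := by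
  classical
  rw [h.apply_eq]
  calc q a = q a * if f a = f a then 1 else 0 := by simp
    _ ≤ _ := single_le_sum (f := fun a' => q a' * if f a' = f a then 1 else 0)
        (fun a' _ => mul_nonneg (hq a') (by split_ifs <;> norm_num)) (mem_univ a)

end IsPushforward

theorem isPushforward_fst {q : β × γ → ℝ} {m : β → ℝ} (hm : ∀ b, m b = ∑ c, q (b, c)) :
    IsPushforward q Prod.fst m := by
  intro g
  simp [Fintype.sum_prod_type, hm, sum_mul]

theorem isPushforward_snd {q : β × γ → ℝ} {n : γ → ℝ} (hn : ∀ c, n c = ∑ b, q (b, c)) :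
    IsPushforward q Prod.snd n := by
  intro g
  rw [Fintype.sum_prod_type, sum_comm]
  simp [hn, sum_mul]

theorem mul_logb_mul {x s t : ℝ} (h : x ≠ 0 → s ≠ 0 ∧ t ≠ 0) :
    x * logb 2 (s * t) = x * logb 2 s + x * logb 2 t := by
  rcases eq_or_ne x 0 with rfl | hx
  · simp
  · obtain ⟨hs, ht⟩ := h hx
    rw [logb_mul hs ht, mul_add]

theorem ent_mul {m : β → ℝ} {n : γ → ℝ} (hm : ∑ b, m b = 1) (hn : ∑ c, n c = 1) :
    ent (fun z : β × γ => m z.1 * n z.2) = ent m + ent n := by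
  have hsplit : ∀ z : β × γ, m z.1 * n z.2 * logb 2 (m z.1 * n z.2)
      = m z.1 * logb 2 (m z.1) * n z.2 + m z.1 * (n z.2 * logb 2 (n z.2)) := fun z => by
    rw [mul_logb_mul fun h => mul_ne_zero_iff.mp h]
    ring
  simp only [ent, hsplit, sum_add_distrib, Fintype.sum_prod_type, ← mul_sum, ← sum_mul, hm, hn]
  ring

theorem sum_mul_logb_le_sum_mul_logb {q r : α → ℝ} (hq : ∀ a, 0 ≤ q a) (hr : ∀ a, 0 ≤ r a)
    (hsum : ∑ a, r a ≤ ∑ a, q a) (hsupp : ∀ a, q a ≠ 0 → r a ≠ 0) :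
    ∑ a, q a * logb 2 (r a) ≤ ∑ a, q a * logb 2 (q a) := by
  have hlog2 : 0 < log 2 := log_pos one_lt_two
  have key : ∀ a, q a * logb 2 (r a) - q a * logb 2 (q a) ≤ (r a - q a) / log 2 := fun a => by
    rcases (hq a).eq_or_lt with h | h
    · rw [← h]
      simpa using div_nonneg (hr a) hlog2.le
    · have hra : 0 < r a := (hr a).lt_of_ne (hsupp a h.ne').symm
      rw [← mul_sub, ← logb_div hra.ne' h.ne', logb, le_div_iff₀ hlog2, mul_div_assoc',
        div_mul_cancel₀ _ hlog2.ne']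
      calc q a * log (r a / q a) ≤ q a * (r a / q a - 1) :=
            mul_le_mul_of_nonneg_left (log_le_sub_one_of_pos (div_pos hra h)) h.le
        _ = r a - q a := by field_simp
  have htotal := sum_le_sum fun a (_ : a ∈ univ) => key a
  rw [sum_sub_distrib, ← sum_div, sum_sub_distrib] at htotal
  linarith [div_nonpos_of_nonpos_of_nonneg (sub_nonpos.mpr hsum) hlog2.le]

theorem IsPushforward.ent_le {q : α → ℝ} {f : α → β} {m : β → ℝ} (h : IsPushforward q f m)
    (hq : ∀ a, 0 ≤ q a) : ent m ≤ ent q := by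
  rw [ent, ent, ← h fun b => logb 2 (m b), neg_le_neg_iff]
  refine sum_le_sum fun a _ => ?_
  rcases (hq a).eq_or_lt with h0 | hpos
  · simp [← h0]
  · exact mul_le_mul_of_nonneg_left
      (logb_le_logb_of_le one_lt_two hpos (h.le_apply_comp hq a)) hpos.le

theorem ent_le_ent_add_ent {q : β × γ → ℝ} {m : β → ℝ} {n : γ → ℝ} (hq : ∀ z, 0 ≤ q z)
    (hq1 : ∑ z, q z = 1) (hm : ∀ b, m b = ∑ c, q (b, c)) (hn : ∀ c, n c = ∑ b, q (b, c)) :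
    ent q ≤ ent m + ent n := by
  have hfst := isPushforward_fst hm
  have hsnd := isPushforward_snd hn
  have hsupp : ∀ z, q z ≠ 0 → m z.1 ≠ 0 ∧ n z.2 ≠ 0 := fun z hz =>
    ⟨((hq z).lt_of_ne hz.symm |>.trans_le (hfst.le_apply_comp hq z)).ne',
      ((hq z).lt_of_ne hz.symm |>.trans_le (hsnd.le_apply_comp hq z)).ne'⟩
  have hgibbs := sum_mul_logb_le_sum_mul_logb (r := fun z => m z.1 * n z.2) hq
    (fun z => mul_nonneg (hfst.nonneg hq _) (hsnd.nonneg hq _))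
    (by simp only [Fintype.sum_prod_type, ← mul_sum, ← hfst.sum_eq, ← hsnd.sum_eq, hq1,
      mul_one, le_refl])
    (fun z hz => mul_ne_zero (hsupp z hz).1 (hsupp z hz).2)
  simp only [mul_logb_mul (hsupp _), sum_add_distrib] at hgibbs
  rw [ent, ent, ent, ← hfst fun b => logb 2 (m b), ← hsnd fun c => logb 2 (n c)]
  linarith

theorem ent_le_ent_add_ent_of_middle {q : α × β × γ → ℝ} {m : α × γ → ℝ} {n : β → ℝ}
    (hq : ∀ z, 0 ≤ q z) (hq1 : ∑ z, q z = 1) (hm : ∀ a c, m (a, c) = ∑ b, q (a, b, c))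
    (hn : ∀ b, n b = ∑ a, ∑ c, q (a, b, c)) :
    ent q ≤ ent m + ent n := by
  let e : (α × γ) × β ≃ α × β × γ :=
    { toFun := fun z => (z.1.1, z.2, z.1.2), invFun := fun z => ((z.1, z.2.2), z.2.1),
      left_inv := fun _ => rfl, right_inv := fun _ => rfl }
  rw [← ent_comp_equiv e]
  refine ent_le_ent_add_ent (fun _ => hq _) ?_ (fun ac => hm ac.1 ac.2) (fun b => ?_)
  · exact (e.sum_comp q).trans hq1
  · rw [hn, Fintype.sum_prod_type]
    rfl

theorem ent_add_ent_le_of_indep {p : α × β × γ × δ → ℝ} {pXY : α × β → ℝ} {pY : β → ℝ}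
    {pW : γ → ℝ} (hpos : ∀ z, 0 ≤ p z) (hsum : ∑ z, p z = 1)
    (hpY : ∀ y, pY y = ∑ x, ∑ w, ∑ u, p (x, y, w, u))
    (hpW : ∀ w, pW w = ∑ x, ∑ y, ∑ u, p (x, y, w, u))
    (hindep : ∀ x y w, ∑ u, p (x, y, w, u) = pXY (x, y) * pW w) :
    ent pY + ent pW ≤ ent p := by
  have hW1 : ∑ w, pW w = 1 := by
    rw [← hsum]
    simp only [hpW, Fintype.sum_prod_type]
    rw [sum_comm]
    exact sum_congr rfl fun x _ => sum_comm
  have hYW : ∀ y w, ∑ x, ∑ u, p (x, y, w, u) = pY y * pW w := fun y w => by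
    simp only [hpY, hindep, ← sum_mul, ← mul_sum, hW1, mul_one]
  have hpush : IsPushforward p (fun z => (z.2.1, z.2.2.1)) fun yw => pY yw.1 * pW yw.2 := by
    intro g
    simp only [Fintype.sum_prod_type, ← hYW, sum_mul]
    rw [sum_comm]
    exact sum_congr rfl fun y _ => sum_comm
  have hY1 : ∑ y, pY y = 1 := by
    rw [← hsum, hpush.sum_eq, Fintype.sum_prod_type]
    simp only [← mul_sum, hW1, mul_one]
  rw [← ent_mul hY1 hW1]
  exact hpush.ent_le hpos

end

theorem stmt2_general {X Y W U : Type*} [Fintype X] [Fintype Y] [Fintype W] [Fintype U]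
    (p : X × Y × W × U → ℝ) (hpos : ∀ z, 0 ≤ p z) (hsum : ∑ z, p z = 1)
    (pX : X → ℝ)
    (pY : Y → ℝ) (hpY : ∀ y, pY y = ∑ x, ∑ w, ∑ u, p (x, y, w, u))
    (pW : W → ℝ) (hpW : ∀ w, pW w = ∑ x, ∑ y, ∑ u, p (x, y, w, u))
    (pU : U → ℝ)
    (pXY : X × Y → ℝ)
    (pXU : X × U → ℝ) (hpXU : ∀ x u, pXU (x, u) = ∑ y, ∑ w, p (x, y, w, u))
    (pXWU : X × W × U → ℝ) (hpXWU : ∀ x w u, pXWU (x, w, u) = ∑ y, p (x, y, w, u))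
    -- W is independent of (X,Y)
    (hindep : ∀ x y w, (∑ u, p (x, y, w, u)) = pXY (x, y) * pW w)
    (ε : ℝ)
    -- I(U;X) = ε
    (hI : ent pU + ent pX - ent pXU = ε)
    -- H(Y|U,X,W) = 0
    (hH : ent p - ent pXWU = 0) :
    -- H(U) ≥ H(Y|X) − H(X|Y) + ε
    ent pU ≥ (ent pXY - ent pX) - (ent pXY - ent pY) + ε := by
  have hYW := ent_add_ent_le_of_indep hpos hsum hpY hpW hindep
  have hXWU : ent pXWU ≤ ent pXU + ent pW := by
    refine ent_le_ent_add_ent_of_middle (fun ⟨x, w, u⟩ => ?_) ?_ (fun x u => ?_) (fun w => ?_)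
    · rw [hpXWU]
      exact sum_nonneg fun _ _ => hpos _
    · rw [← hsum]
      simp only [Fintype.sum_prod_type, hpXWU]
      exact sum_congr rfl fun x _ => (sum_congr rfl fun _ _ => sum_comm).trans sum_comm
    · simp only [hpXU, hpXWU]
      exact sum_comm
    · simp only [hpW, hpXWU]
      exact sum_congr rfl fun x _ => sum_comm
  linarith

/-- If `W ⊥ (X,Y)`, `I(U;X) = ε` and `H(Y|U,X,W) = 0`, then
`H(U) ≥ H(Y|X) − H(X|Y) + ε`. -/
theorem stmt2 {X Y W U : Type*} [Fintype X] [Fintype Y] [Fintype W] [Fintype U]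
    (p : X × Y × W × U → ℝ) (hpos : ∀ z, 0 ≤ p z) (hsum : ∑ z, p z = 1)
    (pX : X → ℝ) (hpX : ∀ x, pX x = ∑ y, ∑ w, ∑ u, p (x, y, w, u))
    (pY : Y → ℝ) (hpY : ∀ y, pY y = ∑ x, ∑ w, ∑ u, p (x, y, w, u))
    (pW : W → ℝ) (hpW : ∀ w, pW w = ∑ x, ∑ y, ∑ u, p (x, y, w, u))
    (pU : U → ℝ) (hpU : ∀ u, pU u = ∑ x, ∑ y, ∑ w, p (x, y, w, u))
    (pXY : X × Y → ℝ) (hpXY : ∀ x y, pXY (x, y) = ∑ w, ∑ u, p (x, y, w, u))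
    (pXU : X × U → ℝ) (hpXU : ∀ x u, pXU (x, u) = ∑ y, ∑ w, p (x, y, w, u))
    (pXWU : X × W × U → ℝ) (hpXWU : ∀ x w u, pXWU (x, w, u) = ∑ y, p (x, y, w, u))
    -- W is independent of (X,Y)
    (hindep : ∀ x y w, (∑ u, p (x, y, w, u)) = pXY (x, y) * pW w)
    (ε : ℝ) (hε : 0 ≤ ε)
    -- I(U;X) = ε
    (hI : ent pU + ent pX - ent pXU = ε)
    -- H(Y|U,X,W) = 0
    (hH : ent p - ent pXWU = 0) :
    -- H(U) ≥ H(Y|X) − H(X|Y) + ε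
    ent pU ≥ (ent pXY - ent pX) - (ent pXY - ent pY) + ε :=
  stmt2_general p hpos hsum pX pY hpY pW hpW pU pXY pXU hpXU pXWU hpXWU hindep ε hI hH
end

section
/- Suppose X is a deterministic function of Y, W is independent of Y, and the map c = C(Y,W) satisfies the lossless property that for each codeword value c and each key value w there is at most one x ∈ 𝒳 with P(C = c, X = x | W = w) > 0. Then for every c in the support of C, P_C(c) ≤ max_x P_X(x); consequently H(C) ≥ log(1 / max_x P_X(x)). -/
open Finset

theorem Fintype.exists_sum_eq_of_subsingleton_pos {ι : Type*} [Fintype ι] [Nonempty ι]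
    {S : ι → ℝ} (hS : ∀ i, 0 ≤ S i) (h : {i | 0 < S i}.Subsingleton) :
    ∃ i, ∑ j, S j = S i := by
  by_cases hpos : ∃ i, 0 < S i
  · obtain ⟨i, hi⟩ := hpos
    refine ⟨i, sum_eq_single_of_mem i (mem_univ i) fun j _ hji => ?_⟩
    by_contra hj
    exact hji (h ((hS j).lt_of_ne' hj) hi)
  · simp only [not_exists, not_lt] at hpos
    have hzero : ∀ i, S i = 0 := fun i => (hpos i).antisymm (hS i)
    exact ⟨Classical.arbitrary ι, by simp [hzero]⟩

theorem Finset.exists_sum_le_sum_fiber {Y X : Type*} [Fintype Y] [Fintype X] [DecidableEq X]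
    [Nonempty X] {s : Finset Y} {q : Y → ℝ} (hq : ∀ y, 0 ≤ q y) (f : Y → X)
    (h : {x | 0 < ∑ y ∈ s with f y = x, q y}.Subsingleton) :
    ∃ x, ∑ y ∈ s, q y ≤ ∑ y with f y = x, q y := by
  obtain ⟨x, hx⟩ := Fintype.exists_sum_eq_of_subsingleton_pos
    (fun x => sum_nonneg fun y _ => hq y) h
  refine ⟨x, ?_⟩
  rw [← sum_fiberwise s f q, hx]
  exact sum_le_sum_of_subset_of_nonneg (filter_subset_filter _ (subset_univ s))
    fun y _ _ => hq y

theorem Finset.sum_uniform_mul_le {ι : Type*} [Fintype ι] [Nonempty ι] {a : ι → ℝ} {M : ℝ}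
    (h : ∀ i, a i ≤ M) : ∑ i, 1 / (Fintype.card ι : ℝ) * a i ≤ M := by
  have hcard : (0 : ℝ) < Fintype.card ι := by exact_mod_cast Fintype.card_pos
  calc ∑ i, 1 / (Fintype.card ι : ℝ) * a i ≤ ∑ _i : ι, 1 / (Fintype.card ι : ℝ) * M :=
        sum_le_sum fun i _ => by gcongr; exact h i
    _ = M := by rw [sum_const, card_univ, nsmul_eq_mul]; field_simp

theorem neg_logb_le_ent {α : Type*} [Fintype α] {p : α → ℝ} {M : ℝ} (hp : ∀ a, 0 ≤ p a)
    (hsum : ∑ a, p a = 1) (hle : ∀ a, 0 < p a → p a ≤ M) :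
    -Real.logb 2 M ≤ ent p := by
  have hterm : ∀ a, p a * Real.logb 2 (p a) ≤ p a * Real.logb 2 M := by
    intro a
    rcases (hp a).eq_or_lt with h | h
    · simp [← h]
    · exact mul_le_mul_of_nonneg_left
        (Real.logb_le_logb_of_le (by norm_num) h (hle a h)) h.le
  have := sum_le_sum fun a (_ : a ∈ univ) => hterm a
  rw [← sum_mul, hsum, one_mul] at this
  unfold ent
  linarith

/-- If `X = f(Y)`, the key `W` is uniform and independent of `Y`, `C = g(Y,W)`, and the code is
lossless (for each `c` and `w` at most one `x` has `P(C=c, X=x | W=w) > 0`), then every codeword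
probability satisfies `P_C(c) ≤ max_x P_X(x)`, and hence `H(C) ≥ log(1/max_x P_X(x))`. -/
theorem stmt8 {Y Xc Cc Wc : Type*} [Fintype Y] [Fintype Xc] [Fintype Cc] [Fintype Wc]
    [DecidableEq Xc] [DecidableEq Cc] [Nonempty Xc] [Nonempty Wc]
    (q : Y → ℝ) (hq : ∀ y, 0 ≤ q y) (hq1 : ∑ y, q y = 1)
    (f : Y → Xc)  -- X = f(Y)
    (g : Y → Wc → Cc)  -- C = g(Y,W), with W uniform on Wc independent of Y
    (pX : Xc → ℝ) (hpX : ∀ x, pX x = ∑ y ∈ Finset.univ.filter (fun y => f y = x), q y)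
    (pC : Cc → ℝ)
    (hpC : ∀ c, pC c = ∑ w : Wc, (1 / (Fintype.card Wc : ℝ)) *
        ∑ y ∈ Finset.univ.filter (fun y => g y w = c), q y)
    -- lossless: for each codeword c and key w, at most one x with P(C=c, X=x | W=w) > 0
    (hlossless : ∀ c w x x',
      0 < ∑ y ∈ Finset.univ.filter (fun y => g y w = c ∧ f y = x), q y →
      0 < ∑ y ∈ Finset.univ.filter (fun y => g y w = c ∧ f y = x'), q y → x = x') :
    (∀ c, 0 < pC c → pC c ≤ Finset.univ.sup' Finset.univ_nonempty pX) ∧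
    ent pC ≥ Real.logb 2 (1 / Finset.univ.sup' Finset.univ_nonempty pX) := by
  set M := univ.sup' univ_nonempty pX
  have hfiber_le : ∀ c w, ∑ y with g y w = c, q y ≤ M := by
    intro c w
    have hunique : {x | 0 < ∑ y ∈ {y | g y w = c} with f y = x, q y}.Subsingleton := by
      intro x hx x' hx'
      simp only [Set.mem_ofPred_eq, filter_filter] at hx hx'
      exact hlossless c w x x' hx hx'
    obtain ⟨x, hx⟩ := exists_sum_le_sum_fiber hq f hunique
    exact hx.trans ((hpX x).ge.trans (le_sup' pX (mem_univ x)))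
  have hpC_le : ∀ c, pC c ≤ M := fun c => (hpC c).trans_le (sum_uniform_mul_le (hfiber_le c))
  have hpC_nonneg : ∀ c, 0 ≤ pC c := fun c => by
    rw [hpC]
    exact sum_nonneg fun w _ => mul_nonneg (by positivity) (sum_nonneg fun y _ => hq y)
  have hpC_sum : ∑ c, pC c = 1 := by
    simp_rw [hpC]
    rw [sum_comm]
    simp_rw [← mul_sum, sum_fiberwise, hq1]
    simp [Fintype.card_ne_zero]
  refine ⟨fun c _ => hpC_le c, ?_⟩
  rw [one_div, Real.logb_inv]
  exact neg_logb_le_ent hpC_nonneg hpC_sum fun c _ => hpC_le c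
end

section
/- Let 0 ≤ ε ≤ H(X) and α = ε/H(X). For any pair (X,Y) with |𝒳| finite and |𝒴| finite or countably infinite, there exists a random variable U with I(U;X) = ε, H(Y|U,X) = 0, and H(U) ≤ Σ_{x∈𝒳} H(Y|X=x) + ε + h(α), where h is the binary entropy function. -/
open Finset Real

lemma ent_eq_sum_negMulLog {α : Type*} [Fintype α] (q : α → ℝ) :
    ent q = (∑ a, negMulLog (q a)) / log 2 := by
  simp only [ent, negMulLog, logb, sum_div, ← sum_neg_distrib]
  congr 1; ext a; ring

lemma ent_mul_of_sum_eq_one {α β : Type*} [Fintype α] [Fintype β] {r : α → ℝ} {s : β → ℝ}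
    (hr : ∑ a, r a = 1) (hs : ∑ b, s b = 1) :
    ent (fun z : α × β => r z.1 * s z.2) = ent r + ent s := by
  simp only [ent_eq_sum_negMulLog, Fintype.sum_prod_type, negMulLog_mul, sum_add_distrib,
    ← sum_mul, ← mul_sum, hr, hs, one_mul, add_div]

section Pi

variable {X Y : Type*} [Fintype X] [Fintype Y] [DecidableEq X] {c : X → Y → ℝ}

lemma sum_pi_prod_eq_one (hc : ∀ x, ∑ y, c x y = 1) : ∑ f : X → Y, ∏ x, c x (f x) = 1 := by
  rw [← Fintype.prod_sum]
  exact prod_eq_one fun x _ => hc x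

lemma sum_pi_prod_mul_apply (hc : ∀ x, ∑ y, c x y = 1) (x₀ : X) (g : Y → ℝ) :
    ∑ f : X → Y, (∏ x, c x (f x)) * g (f x₀) = ∑ y, c x₀ y * g y := by
  set c' := Function.update c x₀ fun y => c x₀ y * g y
  have hc' : ∀ x ∈ ({x₀}ᶜ : Finset X), c' x = c x := fun x hx =>
    Function.update_of_ne (by simpa using hx) _ _
  have h : ∀ f : X → Y, (∏ x, c x (f x)) * g (f x₀) = ∏ x, c' x (f x) := fun f => by
    rw [Fintype.prod_eq_mul_prod_compl x₀, Fintype.prod_eq_mul_prod_compl x₀ fun x => c' x (f x),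
      prod_congr rfl fun x hx => congrFun (hc' x hx) (f x)]
    simp only [c', Function.update_self]
    ring
  rw [sum_congr rfl fun f _ => h f, ← Fintype.prod_sum, Fintype.prod_eq_mul_prod_compl x₀,
    prod_eq_one fun x hx => by rw [hc' x hx, hc], mul_one]
  simp [c']

lemma ent_pi (hc : ∀ x, ∑ y, c x y = 1) :
    ent (fun f : X → Y => ∏ x, c x (f x)) = ∑ x, ent (c x) := by
  have hprod : ∀ f : X → Y,
      negMulLog (∏ x, c x (f x)) = -∑ x, (∏ x', c x' (f x')) * log (c x (f x)) := fun f => by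
    by_cases h0 : ∃ x, c x (f x) = 0
    · obtain ⟨x, hx⟩ := h0
      simp [prod_eq_zero (f := fun x => c x (f x)) (mem_univ x) hx]
    · push Not at h0
      simp only [negMulLog, log_prod fun x _ => h0 x, mul_sum, neg_mul, sum_neg_distrib]
  have hmarg : ∀ x, ∑ f : X → Y, (∏ x', c x' (f x')) * log (c x (f x)) =
      -∑ y, negMulLog (c x y) := fun x => by
    rw [sum_pi_prod_mul_apply hc x fun y => log (c x y)]
    simp [negMulLog]
  simp only [ent_eq_sum_negMulLog, ← sum_div, hprod, sum_neg_distrib]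
  rw [sum_comm]
  simp [hmarg]

end Pi

def pushforward {α β : Type*} [Fintype α] [DecidableEq β] (g : α → β) (r : α → ℝ) (b : β) : ℝ :=
  ∑ a, if g a = b then r a else 0

section Pushforward

variable {α β γ : Type*} [Fintype α] [DecidableEq β] (r : α → ℝ)

lemma pushforward_nonneg {r : α → ℝ} (hr : ∀ a, 0 ≤ r a) (g : α → β) (b : β) :
    0 ≤ pushforward g r b :=
  sum_nonneg fun a _ => by split_ifs <;> simp [hr a]

lemma sum_pushforward [Fintype β] (g : α → β) : ∑ b, pushforward g r b = ∑ a, r a := by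
  unfold pushforward
  rw [sum_comm]
  simp

lemma pushforward_comp [Fintype β] [DecidableEq γ] (h : β → γ) (g : α → β) :
    pushforward h (pushforward g r) = pushforward (h ∘ g) r := by
  ext c
  simp only [pushforward, Function.comp_apply, ite_sum_zero]
  rw [sum_comm]
  refine sum_congr rfl fun a _ => ?_
  rw [Fintype.sum_eq_single (g a) fun b hb => by simp [Ne.symm hb]]
  simp

lemma ent_pushforward_of_injective [Fintype β] {g : α → β} (hg : g.Injective) :
    ent (pushforward g r) = ent r := by
  classical
  have hrange : ∀ b ∉ Set.range g, pushforward g r b = 0 := fun b hb =>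
    sum_eq_zero fun a _ => if_neg fun h => hb ⟨a, h⟩
  have happly : ∀ a, pushforward g r (g a) = r a := fun a => by simp [pushforward, hg.eq_iff]
  simp only [ent_eq_sum_negMulLog]
  rw [Fintype.sum_of_injective g hg (fun a => negMulLog (r a))
    (fun b => negMulLog (pushforward g r b)) (fun b hb => by simp [hrange b hb])
    (fun a => by rw [happly])]

lemma pushforward_prodMap_mul {δ : Type*} [Fintype δ] [DecidableEq δ] (g : α → β)
    (s : δ → ℝ) :
    pushforward (Prod.map g id) (fun z : α × δ => r z.1 * s z.2) =
      fun z => pushforward g r z.1 * s z.2 := by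
  ext ⟨b, d⟩
  simp [pushforward, Fintype.sum_prod_type, Prod.ext_iff, sum_mul, ite_and]

variable {X Y U : Type*} [DecidableEq X] [DecidableEq Y] [DecidableEq U] (G : α → X × Y × U)

lemma sum_pushforward_apply_mid [Fintype Y] (x : X) (u : U) :
    ∑ y, pushforward G r (x, y, u) = pushforward (fun a => ((G a).1, (G a).2.2)) r (x, u) := by
  simp only [pushforward]
  rw [sum_comm]
  simp [Prod.ext_iff, ite_and]

lemma sum_pushforward_apply_last [Fintype U] (x : X) (y : Y) :
    ∑ u, pushforward G r (x, y, u) = pushforward (fun a => ((G a).1, (G a).2.1)) r (x, y) := by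
  simp only [pushforward]
  rw [sum_comm]
  simp [Prod.ext_iff, ite_and]

lemma sum_sum_pushforward_apply [Fintype X] [Fintype Y] (u : U) :
    ∑ x, ∑ y, pushforward G r (x, y, u) = pushforward (fun a => (G a).2.2) r u := by
  simp only [sum_pushforward_apply_mid]
  unfold pushforward
  rw [sum_comm]
  simp [Prod.ext_iff, ite_and]

end Pushforward

def coin (α : ℝ) (b : Bool) : ℝ := if b then α else 1 - α

lemma sum_coin (α : ℝ) : ∑ b, coin α b = 1 := by simp [coin]

lemma ent_coin (α : ℝ) : ent (coin α) = -(α * logb 2 α) - (1 - α) * logb 2 (1 - α) := by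
  simp [ent, coin]
  ring

def reveal {X : Type*} (xb : X × Bool) : Option X := if xb.2 then some xb.1 else none

lemma ent_pushforward_reveal {X : Type*} [Fintype X] [DecidableEq X] {r : X → ℝ}
    (hr : ∑ x, r x = 1) (α : ℝ) :
    ent (pushforward reveal fun xb : X × Bool => r xb.1 * coin α xb.2) =
      α * ent r + ent (coin α) := by
  have hnone :
      pushforward reveal (fun xb : X × Bool => r xb.1 * coin α xb.2) none = 1 - α := by
    simp [pushforward, reveal, coin, Fintype.sum_prod_type, ← sum_mul, hr]
  have hsome : ∀ x, pushforward reveal (fun xb : X × Bool => r xb.1 * coin α xb.2) (some x) =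
      α * r x := fun x => by
    simp [pushforward, reveal, coin, Fintype.sum_prod_type, mul_comm]
  rw [ent_eq_sum_negMulLog, Fintype.sum_option, hnone]
  simp only [hsome]
  simp only [negMulLog_mul, sum_add_distrib, ← sum_mul, ← mul_sum, hr, ent_eq_sum_negMulLog,
    Fintype.sum_bool, coin, if_true, Bool.false_eq_true, if_false]
  ring

section CondDist

variable {X Y : Type*} [Fintype Y] [DecidableEq Y] {p : X × Y → ℝ} {pX : X → ℝ}

/-- On a null row `pX x = 0` the point mass at `y₀` is an arbitrary choice: it keeps `condDist`
a stochastic kernel, and its entropy `0` agrees with `ent (fun y => p (x, y) / 0)`. -/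
noncomputable def condDist (p : X × Y → ℝ) (pX : X → ℝ) (y₀ : Y) (x : X) : Y → ℝ :=
  if pX x = 0 then Pi.single y₀ 1 else fun y => p (x, y) / pX x

lemma condDist_nonneg (hpos : ∀ z, 0 ≤ p z) (hpX : ∀ x, pX x = ∑ y, p (x, y)) (y₀ : Y) (x : X)
    (y : Y) : 0 ≤ condDist p pX y₀ x y := by
  unfold condDist
  split_ifs
  · exact (Pi.single_nonneg.2 zero_le_one : 0 ≤ (Pi.single y₀ 1 : Y → ℝ)) y
  · exact div_nonneg (hpos _) (hpX x ▸ sum_nonneg fun y _ => hpos _)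

lemma sum_condDist (hpX : ∀ x, pX x = ∑ y, p (x, y)) (y₀ : Y) (x : X) :
    ∑ y, condDist p pX y₀ x y = 1 := by
  unfold condDist
  split_ifs with h
  · simp
  · rw [← sum_div, ← hpX, div_self h]

lemma mul_condDist (hpos : ∀ z, 0 ≤ p z) (hpX : ∀ x, pX x = ∑ y, p (x, y)) (y₀ : Y) (x : X)
    (y : Y) : pX x * condDist p pX y₀ x y = p (x, y) := by
  unfold condDist
  split_ifs with h
  · rw [h, zero_mul, eq_comm]
    exact (sum_eq_zero_iff_of_nonneg fun y _ => hpos (x, y)).1 (hpX x ▸ h) y (mem_univ y)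
  · exact mul_div_cancel₀ _ h

lemma ent_condDist (y₀ : Y) (x : X) :
    ent (condDist p pX y₀ x) = ent fun y => p (x, y) / pX x := by
  unfold condDist
  split_ifs with h
  · simp [ent, h, Pi.single_apply, apply_ite]
  · rfl

end CondDist

section FunctionalRepresentation

variable {X Y U : Type*}

/-- `ω = ((x, b), f)` with `x ∼ r`, `b ∼ coin α` and `f x' ∼ c x'`, all independent. -/
def frlWeight [Fintype X] (r : X → ℝ) (c : X → Y → ℝ) (α : ℝ) (ω : (X × Bool) × (X → Y)) : ℝ :=
  (r ω.1.1 * coin α ω.1.2) * ∏ x, c x (ω.2 x)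

def frlObs (enc : Option X × (X → Y) → U) (ω : (X × Bool) × (X → Y)) : X × Y × U :=
  (ω.1.1, ω.2 ω.1.1, enc (reveal ω.1, ω.2))

lemma frlObs_fst_snd_snd_injective {enc : Option X × (X → Y) → U} (henc : enc.Injective) :
    Function.Injective fun ω => ((frlObs enc ω).1, (frlObs enc ω).2.2) := by
  rintro ⟨⟨x, b⟩, f⟩ ⟨⟨x', b'⟩, f'⟩ h
  simp only [frlObs, Prod.mk.injEq] at h
  obtain ⟨rfl, hu⟩ := h
  obtain ⟨hrev, rfl⟩ := Prod.mk.inj (henc hu)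
  cases b <;> cases b' <;> simp_all [reveal]

variable [Fintype X] {r : X → ℝ} {c : X → Y → ℝ} (α : ℝ)

lemma sum_mul_coin (hr : ∑ x, r x = 1) : ∑ xb : X × Bool, r xb.1 * coin α xb.2 = 1 := by
  simp [Fintype.sum_prod_type, ← mul_add, coin, hr]

lemma frlWeight_nonneg (hr : ∀ x, 0 ≤ r x) (hc : ∀ x y, 0 ≤ c x y) (hα₀ : 0 ≤ α) (hα₁ : α ≤ 1)
    (ω : (X × Bool) × (X → Y)) : 0 ≤ frlWeight r c α ω := by
  have hcoin : 0 ≤ coin α ω.1.2 := by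
    unfold coin
    split_ifs <;> linarith
  exact mul_nonneg (mul_nonneg (hr _) hcoin) (prod_nonneg fun x _ => hc _ _)

variable [Fintype Y] [DecidableEq X]

lemma sum_frlWeight (hr : ∑ x, r x = 1) (hc : ∀ x, ∑ y, c x y = 1) :
    ∑ ω, frlWeight r c α ω = 1 := by
  rw [Fintype.sum_prod_type]
  simp only [frlWeight, ← mul_sum, sum_pi_prod_eq_one hc, sum_mul_coin α hr, mul_one]

lemma ent_frlWeight (hr : ∑ x, r x = 1) (hc : ∀ x, ∑ y, c x y = 1) :
    ent (frlWeight r c α) = ent r + ent (coin α) + ∑ x, ent (c x) :=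
  calc ent (frlWeight r c α)
      = ent (fun xb : X × Bool => r xb.1 * coin α xb.2) + ent fun f : X → Y => ∏ x, c x (f x) :=
        ent_mul_of_sum_eq_one (r := fun xb : X × Bool => r xb.1 * coin α xb.2)
          (s := fun f : X → Y => ∏ x, c x (f x)) (sum_mul_coin α hr) (sum_pi_prod_eq_one hc)
    _ = _ := by rw [ent_mul_of_sum_eq_one hr (sum_coin α), ent_pi hc]

variable [DecidableEq Y] [Fintype U] [DecidableEq U]

noncomputable def frlLaw (enc : Option X × (X → Y) → U) (r : X → ℝ) (c : X → Y → ℝ) (α : ℝ) :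
    X × Y × U → ℝ :=
  pushforward (frlObs enc) (frlWeight r c α)

lemma sum_frlLaw_apply (hc : ∀ x, ∑ y, c x y = 1) (enc : Option X × (X → Y) → U) (x : X)
    (y : Y) : ∑ u, frlLaw enc r c α (x, y, u) = r x * c x y := by
  have key : ∀ K, ∑ f : X → Y, (if f x = y then K * ∏ x', c x' (f x') else 0) = K * c x y :=
    fun K => by
      simpa [mul_comm, mul_ite] using sum_pi_prod_mul_apply hc x fun y' => if y' = y then K else 0
  rw [frlLaw, sum_pushforward_apply_last]
  simp [pushforward, frlObs, frlWeight, Fintype.sum_prod_type, Prod.ext_iff, ite_and, key, coin]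
  ring

variable {enc : Option X × (X → Y) → U}

lemma ent_frlLaw (hr : ∑ x, r x = 1) (hc : ∀ x, ∑ y, c x y = 1) (henc : enc.Injective) :
    ent (frlLaw enc r c α) = ent r + ent (coin α) + ∑ x, ent (c x) := by
  have hobs : (frlObs enc).Injective :=
    Function.Injective.of_comp (f := fun z : X × Y × U => (z.1, z.2.2))
      (frlObs_fst_snd_snd_injective henc)
  rw [frlLaw, ent_pushforward_of_injective _ hobs, ent_frlWeight α hr hc]

lemma ent_frlLaw_fst_snd_snd (hr : ∑ x, r x = 1) (hc : ∀ x, ∑ y, c x y = 1)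
    (henc : enc.Injective) :
    ent (fun xu : X × U => ∑ y, frlLaw enc r c α (xu.1, y, xu.2)) =
      ent r + ent (coin α) + ∑ x, ent (c x) := by
  simp only [frlLaw, sum_pushforward_apply_mid]
  rw [ent_pushforward_of_injective _ (frlObs_fst_snd_snd_injective henc), ent_frlWeight α hr hc]

lemma ent_frlLaw_snd_snd (hr : ∑ x, r x = 1) (hc : ∀ x, ∑ y, c x y = 1)
    (henc : enc.Injective) :
    ent (fun u => ∑ x, ∑ y, frlLaw enc r c α (x, y, u)) =
      α * ent r + ent (coin α) + ∑ x, ent (c x) := by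
  simp only [frlLaw, sum_sum_pushforward_apply]
  rw [show (fun ω => (frlObs enc ω).2.2) = enc ∘ Prod.map reveal id from rfl, ← pushforward_comp,
    ent_pushforward_of_injective _ henc]
  calc ent (pushforward (Prod.map reveal id) (frlWeight r c α))
      = ent fun z : Option X × (X → Y) =>
          pushforward reveal (fun xb : X × Bool => r xb.1 * coin α xb.2) z.1 * ∏ x, c x (z.2 x) :=
        congrArg ent (pushforward_prodMap_mul (fun xb : X × Bool => r xb.1 * coin α xb.2) reveal
          fun f : X → Y => ∏ x, c x (f x))
    _ = _ := by
      rw [ent_mul_of_sum_eq_one ((sum_pushforward _ _).trans (sum_mul_coin α hr))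
        (sum_pi_prod_eq_one hc), ent_pushforward_reveal hr, ent_pi hc]

end FunctionalRepresentation

/-- Extended Functional Representation Lemma with entropy bound: for `0 ≤ ε ≤ H(X)` and
`α = ε/H(X)` there exists `U` with `I(U;X) = ε`, `H(Y|U,X) = 0` and
`H(U) ≤ Σ_x H(Y|X=x) + ε + h(α)`, where `h` is the binary entropy. -/
theorem stmt9 {X Y : Type*} [Fintype X] [Fintype Y]
    (p : X × Y → ℝ) (hpos : ∀ z, 0 ≤ p z) (hsum : ∑ z, p z = 1)
    (pX : X → ℝ) (hpX : ∀ x, pX x = ∑ y, p (x, y))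
    (ε α : ℝ) (hε0 : 0 ≤ ε) (hεH : ε ≤ ent pX) (hHX : 0 < ent pX)
    (hα : α = ε / ent pX) :
    ∃ (n : ℕ) (q : X × Y × Fin n → ℝ),
      (∀ z, 0 ≤ q z) ∧ (∑ z, q z = 1) ∧
      -- consistency with P_{XY}
      (∀ x y, (∑ u, q (x, y, u)) = p (x, y)) ∧
      -- I(U;X) = ε
      (ent (fun u => ∑ x, ∑ y, q (x, y, u))
        + ent pX
        - ent (fun xu : X × Fin n => ∑ y, q (xu.1, y, xu.2)) = ε) ∧
      -- H(Y|U,X) = 0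
      (ent q - ent (fun xu : X × Fin n => ∑ y, q (xu.1, y, xu.2)) = 0) ∧
      -- H(U) ≤ Σ_x H(Y|X=x) + ε + h(α)
      (ent (fun u => ∑ x, ∑ y, q (x, y, u))
        ≤ (∑ x, ent (fun y => p (x, y) / pX x)) + ε
          + (-(α * Real.logb 2 α) - (1 - α) * Real.logb 2 (1 - α))) := by
  classical
  obtain ⟨⟨-, y₀⟩, -, -⟩ := exists_ne_zero_of_sum_ne_zero (by simp [hsum] : ∑ z, p z ≠ 0)
  have hpX_nonneg x : 0 ≤ pX x := hpX x ▸ sum_nonneg fun y _ => hpos (x, y)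
  have hpX_sum : ∑ x, pX x = 1 := by simp_rw [hpX, ← Fintype.sum_prod_type', hsum]
  have hα₀ : 0 ≤ α := hα ▸ div_nonneg hε0 hHX.le
  have hα₁ : α ≤ 1 := hα ▸ (div_le_one hHX).2 hεH
  have hαε : α * ent pX = ε := by rw [hα, div_mul_cancel₀ _ hHX.ne']
  have hc := sum_condDist hpX y₀
  have hcond : ∑ x, ent (condDist p pX y₀ x) = ∑ x, ent fun y => p (x, y) / pX x :=
    sum_congr rfl fun x _ => ent_condDist y₀ x
  have henc := (Fintype.equivFin (Option X × (X → Y))).injective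
  refine ⟨_, frlLaw (Fintype.equivFin _) pX (condDist p pX y₀) α,
    pushforward_nonneg (frlWeight_nonneg α hpX_nonneg (condDist_nonneg hpos hpX y₀) hα₀ hα₁) _,
    (sum_pushforward _ _).trans (sum_frlWeight α hpX_sum hc), fun x y => ?_, ?_, ?_, ?_⟩
  · rw [sum_frlLaw_apply α hc, mul_condDist hpos hpX]
  · rw [ent_frlLaw_snd_snd α hpX_sum hc henc, ent_frlLaw_fst_snd_snd α hpX_sum hc henc]
    linarith
  · rw [ent_frlLaw α hpX_sum hc henc, ent_frlLaw_fst_snd_snd α hpX_sum hc henc, sub_self]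
  · rw [ent_frlLaw_snd_snd α hpX_sum hc henc, hcond, hαε, ent_coin]
    linarith
end

section
/- For any 0 ≤ ε < I(X;Y) and pair (X,Y) on finite alphabets 𝒳 and 𝒴, there exists a random variable U on an alphabet 𝒰 with I(U;X) = ε, H(Y|U,X) = 0, and |𝒰| ≤ (|𝒳|(|𝒴|−1)+1)(|𝒳|+1). Moreover, if X is a deterministic function of Y, U can be chosen with |𝒰| ≤ (|𝒴|−|𝒳|+1)(|𝒳|+1). -/
/-!
Write `Y = g(X, C)` with `C` independent of `X` (the functional representation lemma). The law of
`C` is built greedily: choose a support point in every conditional law `p(· | x)`, split off the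
smallest of their masses as one cell of `C`, and repeat on the rest. Each step kills a support
point of `(X, Y)`, so the cells can be labelled by distinct support points `(x, y)` with
`g(x, (x, y)) = y`.

Now mix: with probability `1 - θ` let `U = C`, and with probability `θ` let `U` be a copy of
`(X, Y)` (of `Y` alone when `X` is a function of `Y`, where distinct labels have distinct
`y`). Because of the labelling, a single decoder recovers `Y` from `(X, U)` on both branches, so
`H(Y | U, X) = 0` for every `θ`. `I(U; X)` depends continuously on `θ`; it is `0` at `θ = 0` and
at least `I(X; Y) > ε` at `θ = 1`, so by the intermediate value theorem some `θ` gives exactly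
`ε`. The alphabet has `|𝒳||𝒴|` letters (`|𝒴|` when `X` is a function of `Y`), which is within
both stated bounds.
-/

open Finset Real

noncomputable section

namespace ExtendedFRL

section Entropy

variable {α β γ : Type*} [Fintype α]

theorem ent_eq_sum_negMulLog (q : α → ℝ) : ent q = (∑ a, negMulLog (q a)) / log 2 := by
  simp only [ent, negMulLog, logb, sum_div, ← sum_neg_distrib]
  congr 1; ext a; ring

theorem continuous_ent : Continuous (ent : (α → ℝ) → ℝ) := by
  simp_rw [funext ent_eq_sum_negMulLog]
  fun_prop

theorem ent_comp_equiv [Fintype β] (e : α ≃ β) (q : β → ℝ) : ent (q ∘ e) = ent q := by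
  simp only [ent, Function.comp_apply, e.sum_comp fun b => q b * logb 2 (q b)]

theorem ent_prod [Fintype β] {a : α → ℝ} {b : β → ℝ} (ha : ∑ i, a i = 1) (hb : ∑ j, b j = 1) :
    ent (fun z : α × β => a z.1 * b z.2) = ent a + ent b := by
  simp only [ent_eq_sum_negMulLog, negMulLog_mul, Fintype.sum_prod_type, sum_add_distrib,
    ← sum_mul, ← mul_sum, ha, hb, one_mul, add_div]

theorem apply_sum_of_subsingleton_support {q : α → ℝ} (hq : ∀ a a', q a ≠ 0 → q a' ≠ 0 → a = a')
    {f : ℝ → ℝ} (hf : f 0 = 0) : f (∑ a, q a) = ∑ a, f (q a) := by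
  by_cases h : ∃ a, q a ≠ 0
  · obtain ⟨a, ha⟩ := h
    have hzero : ∀ a', a' ≠ a → q a' = 0 := fun a' ha' => by_contra fun h' => ha' (hq a' a h' ha)
    rw [Fintype.sum_eq_single a hzero,
      Fintype.sum_eq_single a fun a' ha' => by rw [hzero a' ha', hf]]
  · push Not at h
    simp [h, hf]

variable [DecidableEq β]

def pushforward (h : α → β) (q : α → ℝ) (b : β) : ℝ := ∑ a, if h a = b then q a else 0

theorem pushforward_nonneg {q : α → ℝ} (hq : ∀ a, 0 ≤ q a) (h : α → β) (b : β) :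
    0 ≤ pushforward h q b :=
  sum_nonneg fun a _ => by split_ifs; exacts [hq a, le_rfl]

theorem sum_pushforward [Fintype β] (h : α → β) (q : α → ℝ) :
    ∑ b, pushforward h q b = ∑ a, q a := by
  simp only [pushforward]
  rw [sum_comm]
  simp

theorem pushforward_comp [Fintype β] [DecidableEq γ] (g : β → γ) (h : α → β) (q : α → ℝ) :
    pushforward g (pushforward h q) = pushforward (g ∘ h) q := by
  ext c
  simp only [pushforward, Function.comp_apply, ← sum_filter]
  rw [sum_comm' (t' := univ.filter fun a => g (h a) = c) (s' := fun a => {h a})]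
  · simp
  · intro b a
    simp only [mem_filter, mem_univ, true_and, mem_singleton]
    constructor <;> rintro ⟨h1, rfl⟩ <;> simp [h1]

theorem ent_pushforward_of_injOn [Fintype β] {q : α → ℝ} {h : α → β}
    (hh : ∀ a a', q a ≠ 0 → q a' ≠ 0 → h a = h a' → a = a') :
    ent (pushforward h q) = ent q := by
  have hfiber : ∀ b, negMulLog (pushforward h q b) = pushforward h (negMulLog ∘ q) b := fun b => by
    rw [pushforward, apply_sum_of_subsingleton_support _ negMulLog_zero]
    · exact sum_congr rfl fun a _ => by split_ifs <;> simp
    · intro a a' ha ha'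
      rw [ne_eq, ite_eq_right_iff, Classical.not_imp] at ha ha'
      exact hh a a' ha.2 ha'.2 (ha.1.trans ha'.1.symm)
  simp only [ent_eq_sum_negMulLog, hfiber, sum_pushforward, Function.comp_apply]

theorem ent_pushforward_le [Fintype β] {q : α → ℝ} (hq : ∀ a, 0 ≤ q a) (h : α → β) :
    ent (pushforward h q) ≤ ent q := by
  have hle : ∀ a, q a ≤ pushforward h q (h a) := fun a => by
    simpa [pushforward] using single_le_sum (f := fun a' => if h a' = h a then q a' else 0)
      (fun a' _ => by split_ifs <;> simp [hq]) (mem_univ a)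
  have hfiber : ∀ b, negMulLog (pushforward h q b) =
      pushforward h (fun a => -q a * log (pushforward h q (h a))) b := fun b => by
    simp only [pushforward, negMulLog, sum_mul, ← sum_neg_distrib]
    refine sum_congr rfl fun a _ => ?_
    split_ifs with hab
    · subst hab; ring
    · simp
  rw [ent_eq_sum_negMulLog, ent_eq_sum_negMulLog]
  refine div_le_div_of_nonneg_right ?_ (log_nonneg one_le_two)
  rw [sum_congr rfl fun b _ => hfiber b, sum_pushforward]
  refine sum_le_sum fun a _ => ?_
  rcases (hq a).eq_or_lt with h0 | hpos
  · simp [← h0]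
  · rw [negMulLog, neg_mul, neg_mul, neg_le_neg_iff]
    exact mul_le_mul_of_nonneg_left (log_le_log hpos (hle a)) (hq a)

end Entropy

section FunctionalRep

variable {X Y U : Type*} [Fintype U]

/-- Encodes `H(Y | U, X) = 0`: `Y = G X U` on the support of the joint law `q` of `(X, Y, U)`. -/
structure IsFunctionalRep (p : X × Y → ℝ) (G : X → U → Y) (q : X × Y × U → ℝ) : Prop where
  nonneg : ∀ z, 0 ≤ q z
  sum_eq : ∀ x y, ∑ u, q (x, y, u) = p (x, y)
  eq_of_ne_zero : ∀ x y u, q (x, y, u) ≠ 0 → y = G x u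

theorem IsFunctionalRep.convexComb {p : X × Y → ℝ} {G : X → U → Y} {q₀ q₁ : X × Y × U → ℝ}
    (h₀ : IsFunctionalRep p G q₀) (h₁ : IsFunctionalRep p G q₁) {θ : ℝ} (hθ₀ : 0 ≤ θ)
    (hθ₁ : θ ≤ 1) : IsFunctionalRep p G fun z => (1 - θ) * q₀ z + θ * q₁ z where
  nonneg z := by have := h₀.nonneg z; have := h₁.nonneg z; positivity
  sum_eq x y := by rw [sum_add_distrib, ← mul_sum, ← mul_sum, h₀.sum_eq, h₁.sum_eq]; ring
  eq_of_ne_zero x y u h := by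
    by_cases h0 : q₀ (x, y, u) = 0
    · exact h₁.eq_of_ne_zero x y u fun h1 => h (by rw [h0, h1]; ring)
    · exact h₀.eq_of_ne_zero x y u h0

/-- `U` is independent of `X` and `G x U` has law `p (x, ·) / pX x`. -/
structure IsIndependentRep [DecidableEq Y] (p : X × Y → ℝ) (pX : X → ℝ) (ν : U → ℝ)
    (G : X → U → Y) : Prop where
  nonneg : ∀ u, 0 ≤ ν u
  sum_eq_one : ∑ u, ν u = 1
  mul_sum_eq : ∀ x y, pX x * ∑ u, (if G x u = y then ν u else 0) = p (x, y)

def indepRep [DecidableEq Y] (pX : X → ℝ) (ν : U → ℝ) (G : X → U → Y) : X × Y × U → ℝ :=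
  fun z => if G z.1 z.2.2 = z.2.1 then pX z.1 * ν z.2.2 else 0

theorem IsIndependentRep.isFunctionalRep [DecidableEq Y] {p : X × Y → ℝ} {pX : X → ℝ}
    {ν : U → ℝ} {G : X → U → Y} (hν : IsIndependentRep p pX ν G) (hpX : ∀ x, 0 ≤ pX x) :
    IsFunctionalRep p G (indepRep pX ν G) where
  nonneg z := by
    unfold indepRep
    split_ifs
    exacts [mul_nonneg (hpX _) (hν.nonneg _), le_rfl]
  sum_eq x y := by
    rw [← hν.mul_sum_eq, mul_sum]
    exact sum_congr rfl fun u _ => by simp [indepRep, mul_ite]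
  eq_of_ne_zero x y u h := by
    by_contra hne
    exact h (if_neg (Ne.symm hne))

def copyRep [DecidableEq U] (p : X × Y → ℝ) (κ : X × Y → U) : X × Y × U → ℝ :=
  fun z => if κ (z.1, z.2.1) = z.2.2 then p (z.1, z.2.1) else 0

theorem isFunctionalRep_copyRep [DecidableEq U] {p : X × Y → ℝ} (hp : ∀ z, 0 ≤ p z)
    {κ : X × Y → U} {G : X → U → Y} (hG : ∀ x y, p (x, y) ≠ 0 → G x (κ (x, y)) = y) :
    IsFunctionalRep p G (copyRep p κ) where
  nonneg z := by unfold copyRep; split_ifs <;> simp [hp]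
  sum_eq x y := by simp [copyRep]
  eq_of_ne_zero x y u h := by
    unfold copyRep at h
    split_ifs at h with hu
    · exact (hu ▸ hG x y h).symm
    · exact absurd rfl h

end FunctionalRep

section MutualInformation

variable {X Y U : Type*} [Fintype X] [Fintype Y] [Fintype U]

def margU (q : X × Y × U → ℝ) (u : U) : ℝ := ∑ x, ∑ y, q (x, y, u)

def margXU (q : X × Y × U → ℝ) (xu : X × U) : ℝ := ∑ y, q (xu.1, y, xu.2)

def infoUX (pX : X → ℝ) (q : X × Y × U → ℝ) : ℝ := ent (margU q) + ent pX - ent (margXU q)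

theorem margXU_eq_pushforward [DecidableEq X] [DecidableEq U] (q : X × Y × U → ℝ) :
    margXU q = pushforward (fun z => (z.1, z.2.2)) q := by
  ext ⟨x, u⟩
  simp [margXU, pushforward, Fintype.sum_prod_type, Prod.ext_iff, ite_and]

namespace IsFunctionalRep

variable {p : X × Y → ℝ} {G : X → U → Y} {q : X × Y × U → ℝ}

theorem sum_eq_one (hq : IsFunctionalRep p G q) (hsum : ∑ z, p z = 1) : ∑ z, q z = 1 := by
  rw [← hsum, Fintype.sum_prod_type, Fintype.sum_prod_type]
  simp_rw [Fintype.sum_prod_type, hq.sum_eq]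

theorem ent_eq_ent_margXU (hq : IsFunctionalRep p G q) : ent q = ent (margXU q) := by
  classical
  rw [margXU_eq_pushforward, ent_pushforward_of_injOn]
  rintro ⟨x, y, u⟩ ⟨x', y', u'⟩ h h' he
  simp only [Prod.mk.injEq] at he
  obtain ⟨rfl, rfl⟩ := he
  rw [hq.eq_of_ne_zero _ _ _ h, hq.eq_of_ne_zero _ _ _ h']

theorem exists_fin (hq : IsFunctionalRep p G q) (hsum : ∑ z, p z = 1) (pX : X → ℝ) :
    ∃ q' : X × Y × Fin (Fintype.card U) → ℝ, (∀ z, 0 ≤ q' z) ∧ ∑ z, q' z = 1 ∧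
      (∀ x y, ∑ u, q' (x, y, u) = p (x, y)) ∧ infoUX pX q' = infoUX pX q ∧
      ent q' - ent (margXU q') = 0 := by
  set e := (Fintype.equivFin U).symm
  have hq' : IsFunctionalRep p (fun x k => G x (e k)) fun z => q (z.1, z.2.1, e z.2.2) :=
    { nonneg := fun z => hq.nonneg _
      sum_eq := fun x y => by rw [e.sum_comp fun u => q (x, y, u), hq.sum_eq]
      eq_of_ne_zero := fun x y k h => hq.eq_of_ne_zero x y (e k) h }
  refine ⟨_, hq'.nonneg, hq'.sum_eq_one hsum, hq'.sum_eq, ?_,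
    by rw [hq'.ent_eq_ent_margXU, sub_self]⟩
  rw [infoUX, infoUX, ← ent_comp_equiv e (margU q),
    ← ent_comp_equiv ((Equiv.refl X).prodCongr e) (margXU q)]
  rfl

end IsFunctionalRep

theorem continuous_infoUX (pX : X → ℝ) :
    Continuous (infoUX pX : (X × Y × U → ℝ) → ℝ) := by
  unfold infoUX margU margXU
  refine ((continuous_ent.comp ?_).add continuous_const).sub (continuous_ent.comp ?_) <;>
    exact continuous_pi fun _ => by fun_prop

theorem exists_isFunctionalRep_infoUX_eq {p : X × Y → ℝ} {G : X → U → Y}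
    {q₀ q₁ : X × Y × U → ℝ} (h₀ : IsFunctionalRep p G q₀) (h₁ : IsFunctionalRep p G q₁)
    (pX : X → ℝ) {ε : ℝ} (hε₀ : infoUX pX q₀ ≤ ε) (hε₁ : ε ≤ infoUX pX q₁) :
    ∃ q, IsFunctionalRep p G q ∧ infoUX pX q = ε := by
  have hcont : Continuous fun θ : ℝ => infoUX pX fun z => (1 - θ) * q₀ z + θ * q₁ z :=
    (continuous_infoUX pX).comp (continuous_pi fun _ => by fun_prop)
  obtain ⟨θ, ⟨hθ₀, hθ₁⟩, hθ⟩ :=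
    intermediate_value_Icc zero_le_one hcont.continuousOn (by simpa using And.intro hε₀ hε₁)
  exact ⟨_, h₀.convexComb h₁ hθ₀ hθ₁, hθ⟩

theorem infoUX_indepRep [DecidableEq Y] {pX : X → ℝ} {ν : U → ℝ} (G : X → U → Y)
    (hpX : ∑ x, pX x = 1) (hν : ∑ u, ν u = 1) : infoUX pX (indepRep pX ν G) = 0 := by
  have hXU : margXU (indepRep pX ν G) = fun xu => pX xu.1 * ν xu.2 := by
    ext ⟨x, u⟩
    simp [margXU, indepRep]
  have hU : margU (indepRep pX ν G) = ν := by
    ext u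
    simp [margU, indepRep, ← sum_mul, hpX]
  rw [infoUX, hXU, hU, ent_prod hpX hν]
  ring

theorem le_infoUX_copyRep [DecidableEq Y] [DecidableEq U] {p : X × Y → ℝ} (hp : ∀ z, 0 ≤ p z)
    (pX : X → ℝ) {pY : Y → ℝ} (hpY : ∀ y, pY y = ∑ x, p (x, y)) {κ : X × Y → U} {h : U → Y}
    (hκ : ∀ z, h (κ z) = z.2) :
    ent pX + ent pY - ent p ≤ infoUX pX (copyRep p κ) := by
  classical
  have hU : margU (copyRep p κ) = pushforward κ p := by
    ext u
    simp [margU, copyRep, pushforward, Fintype.sum_prod_type]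
  have hXU : margXU (copyRep p κ) = pushforward (fun z => (z.1, κ z)) p := by
    ext ⟨x, u⟩
    simp only [margXU, copyRep, pushforward, Fintype.sum_prod_type, Prod.ext_iff, ite_and]
    rw [Fintype.sum_eq_single x fun x' hx' => by simp [hx']]
    simp
  have hY : pY = pushforward h (pushforward κ p) := by
    rw [pushforward_comp]
    ext y
    simp [hpY, hκ, pushforward, Fintype.sum_prod_type]
  have hXY : ent (pushforward (fun z => (z.1, κ z)) p) = ent p :=
    ent_pushforward_of_injOn fun z z' _ _ he => by
      simp only [Prod.mk.injEq] at he
      exact Prod.ext he.1 (by rw [← hκ z, ← hκ z', he.2])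
  rw [infoUX, hU, hXU, hXY, hY]
  linarith [ent_pushforward_le (pushforward_nonneg hp κ) h]

end MutualInformation

section Coupling

variable {X Y : Type*} [Fintype X] [Fintype Y]

theorem card_support_lt {P P' : X → Y → ℝ} (hsub : ∀ x y, P' x y ≠ 0 → P x y ≠ 0) {x₁ : X}
    {y₁ : Y} (h₁ : P x₁ y₁ ≠ 0) (h₁' : P' x₁ y₁ = 0) :
    #{z : X × Y | P' z.1 z.2 ≠ 0} < #{z : X × Y | P z.1 z.2 ≠ 0} :=
  card_lt_card ⟨monotone_filter_right _ fun z _ => hsub z.1 z.2, fun hle => by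
    simpa [h₁'] using hle (by simpa using h₁ : (x₁, y₁) ∈ _)⟩

variable [DecidableEq X] [DecidableEq Y]

structure IsLabelledCoupling (P : X → Y → ℝ) (m : ℝ) (μ : X × Y → ℝ) (g : X → X × Y → Y) :
    Prop where
  nonneg : ∀ c, 0 ≤ μ c
  sum_eq : ∀ x, ∑ y, P x y = m → ∀ y, ∑ c, (if g x c = y then μ c else 0) = P x y
  label : ∀ c, μ c ≠ 0 → P c.1 c.2 ≠ 0 ∧ g c.1 c = c.2

theorem IsLabelledCoupling.add_atom {P P' : X → Y → ℝ} {m m' : ℝ} {μ : X × Y → ℝ}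
    {g : X → X × Y → Y} (h : IsLabelledCoupling P' m' μ g) (hP' : ∀ x y, 0 ≤ P' x y)
    {A : Finset X} {s : X → Y} {δ : ℝ} (hδ : 0 < δ) {x₁ : X} (hx₁ : x₁ ∈ A)
    (hc₀ : P' x₁ (s x₁) = 0) (hA : ∀ x, ∑ y, P x y = m → x ∈ A ∧ ∑ y, P' x y = m')
    (hPP' : ∀ x y, P x y = P' x y + if x ∈ A ∧ y = s x then δ else 0) :
    IsLabelledCoupling P m (fun c => if c = (x₁, s x₁) then δ else μ c)
      (fun x c => if c = (x₁, s x₁) then s x else g x c) where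
  nonneg c := by
    split_ifs
    exacts [hδ.le, h.nonneg c]
  sum_eq x hx y := by
    have hμc₀ : μ (x₁, s x₁) = 0 := by_contra fun hne => (h.label _ hne).1 hc₀
    have hterm : ∀ c, (if (if c = (x₁, s x₁) then s x else g x c) = y then
        (if c = (x₁, s x₁) then δ else μ c) else 0) =
        (if g x c = y then μ c else 0) + if c = (x₁, s x₁) then (if s x = y then δ else 0) else 0 :=
      fun c => by by_cases hc : c = (x₁, s x₁) <;> simp [hc, hμc₀]
    rw [sum_congr rfl fun c _ => hterm c, sum_add_distrib, h.sum_eq x (hA x hx).2 y,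
      sum_ite_eq', hPP', if_pos (mem_univ _)]
    simp [(hA x hx).1, eq_comm]
  label c hc := by
    by_cases hc₀ : c = (x₁, s x₁)
    · subst hc₀
      simp [hPP', hc₀, hx₁, hδ.ne']
    · simp only [hc₀, if_false] at hc ⊢
      refine ⟨fun h0 => ?_, (h.label c hc).2⟩
      have := hPP' c.1 c.2
      split_ifs at this <;> linarith [hP' c.1 c.2, (hP' c.1 c.2).lt_of_ne' (h.label c hc).1]

theorem exists_isLabelledCoupling (P : X → Y → ℝ) (hP : ∀ x y, 0 ≤ P x y) (m : ℝ)
    (hrow : ∀ x, ∑ y, P x y = 0 ∨ ∑ y, P x y = m) :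
    ∃ μ g, IsLabelledCoupling P m μ g := by
  induction hN : #{z : X × Y | P z.1 z.2 ≠ 0} using Nat.strong_induction_on
    generalizing P m with
  | _ N ih =>
  by_cases hzero : ∀ x, ∑ y, P x y = 0
  · refine ⟨0, fun _ c => c.2, fun _ => le_rfl, fun x _ y => ?_, fun c h => absurd rfl h⟩
    simp [(sum_eq_zero_iff_of_nonneg fun y _ => hP x y).1 (hzero x) y (mem_univ y)]
  push Not at hzero
  obtain ⟨x₀, hx₀⟩ := hzero
  have hm : m ≠ 0 := (hrow x₀).resolve_left hx₀ ▸ hx₀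
  set A := univ.filter fun x => ∑ y, P x y = m with hA
  have hpick : ∀ x, ∃ y, x ∈ A → 0 < P x y := fun x => by
    by_cases hx : x ∈ A
    · obtain ⟨y, -, hy⟩ := exists_ne_zero_of_sum_ne_zero ((mem_filter.1 hx).2 ▸ hm)
      exact ⟨y, fun _ => (hP x y).lt_of_ne' hy⟩
    · obtain ⟨y, -⟩ := exists_ne_zero_of_sum_ne_zero hx₀
      exact ⟨y, fun h => absurd h hx⟩
  choose s hs using hpick
  obtain ⟨x₁, hx₁, hmin⟩ := A.exists_min_image (fun x => P x (s x))
    ⟨x₀, by simpa [hA] using (hrow x₀).resolve_left hx₀⟩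
  -- the new cell gets the smallest chosen mass, which kills the support point `(x₁, s x₁)`
  set P' : X → Y → ℝ := fun x y => P x y - if x ∈ A ∧ y = s x then P x₁ (s x₁) else 0 with hP'
  have hP'nonneg : ∀ x y, 0 ≤ P' x y := fun x y => by
    simp only [hP']
    split_ifs with h
    · rw [h.2]; linarith [hmin x h.1]
    · linarith [hP x y]
  have hrowP' : ∀ x, ∑ y, P' x y = (∑ y, P x y) - if x ∈ A then P x₁ (s x₁) else 0 := fun x => by
    by_cases hx : x ∈ A <;> simp [hP', hx, sum_sub_distrib]
  have hsub : ∀ x y, P' x y ≠ 0 → P x y ≠ 0 := fun x y h h0 => h <| by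
    simp only [hP', h0, if_neg fun hxy : x ∈ A ∧ y = s x => (hs x hxy.1).ne' (hxy.2 ▸ h0),
      sub_zero]
  have hc₀ : P' x₁ (s x₁) = 0 := by simp [hP', hx₁]
  have hrow' : ∀ x, ∑ y, P' x y = 0 ∨ ∑ y, P' x y = m - P x₁ (s x₁) := fun x => by
    by_cases hx : x ∈ A
    · simp [hrowP', hx, (mem_filter.1 hx).2]
    · simp [hrowP', hx, (hrow x).resolve_right (by simpa [hA] using hx)]
  obtain ⟨μ, g, hμg⟩ :=
    ih _ (hN ▸ card_support_lt hsub (hs x₁ hx₁).ne' hc₀) P' hP'nonneg _ hrow' rfl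
  exact ⟨_, _, hμg.add_atom hP'nonneg (s := s) (hs x₁ hx₁) hx₁ hc₀
    (fun x hx => by simp [hrowP', hA, hx]) (fun x y => by simp [hP'])⟩

end Coupling

section Main

variable {X Y : Type*} [Fintype X] [Fintype Y]

theorem sum_eq_sum_graph (F : X × Y → ℝ) (f : Y → X) (hF : ∀ c, F c ≠ 0 → f c.2 = c.1) :
    ∑ c, F c = ∑ y, F (f y, y) := by
  rw [Fintype.sum_prod_type_right]
  exact sum_congr rfl fun y _ =>
    Fintype.sum_eq_single (f y) fun x hx => by_contra fun h => hx (hF (x, y) h).symm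

variable [DecidableEq Y] {p : X × Y → ℝ} {pX : X → ℝ}

theorem exists_isIndependentRep [DecidableEq X] (hpos : ∀ z, 0 ≤ p z) (hsum : ∑ z, p z = 1)
    (hpX : ∀ x, pX x = ∑ y, p (x, y)) :
    ∃ (μ : X × Y → ℝ) (g : X → X × Y → Y), IsIndependentRep p pX μ g ∧
      (∀ c, μ c ≠ 0 → p c ≠ 0) ∧ ∀ x y, p (x, y) ≠ 0 → g x (x, y) = y := by
  have hpX0 : ∀ x, 0 ≤ pX x := fun x => hpX x ▸ sum_nonneg fun y _ => hpos _
  have hle : ∀ x y, p (x, y) ≤ pX x := fun x y =>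
    hpX x ▸ single_le_sum (fun y' _ => hpos (x, y')) (mem_univ y)
  -- rows with `pX x = 0` become zero rows, since `p (x, y) / 0 = 0`
  have hrow : ∀ x, ∑ y, p (x, y) / pX x = 0 ∨ ∑ y, p (x, y) / pX x = 1 := fun x => by
    rw [← sum_div, ← hpX]
    by_cases hx : pX x = 0 <;> simp [hx]
  obtain ⟨μ, g, hμg⟩ := exists_isLabelledCoupling (fun x y => p (x, y) / pX x)
    (fun x y => div_nonneg (hpos _) (hpX0 x)) 1 hrow
  -- cells of mass zero are relabelled so that `g' x (x, y) = y` on the whole support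
  set g' : X → X × Y → Y := fun x c => if μ c = 0 then c.2 else g x c
  have hrep : ∀ x y, pX x * ∑ c, (if g' x c = y then μ c else 0) = p (x, y) := by
    intro x y
    have hg' : ∑ c, (if g' x c = y then μ c else 0) = ∑ c, if g x c = y then μ c else 0 :=
      sum_congr rfl fun c _ => by by_cases h : μ c = 0 <;> simp [g', h]
    rw [hg']
    by_cases hx : pX x = 0
    · rw [hx, zero_mul, le_antisymm (hx ▸ hle x y) (hpos _)]
    · rw [hμg.sum_eq x ((hrow x).resolve_left (by simpa [← sum_div, ← hpX])) y,
        mul_div_cancel₀ _ hx]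
  obtain ⟨x₀, hx₀⟩ : ∃ x, pX x ≠ 0 := by
    by_contra! h
    simp [Fintype.sum_prod_type, ← hpX, h] at hsum
  refine ⟨μ, g', ⟨hμg.nonneg, ?_, hrep⟩, fun c hc => ?_, fun x y _ => ?_⟩
  · have hsum₀ := sum_congr rfl fun y (_ : y ∈ univ) => hrep x₀ y
    rw [← mul_sum, sum_comm, ← hpX] at hsum₀
    simpa [hx₀] using hsum₀
  · exact (div_ne_zero_iff.1 (hμg.label c hc).1).1
  · by_cases h : μ (x, y) = 0
    · simp [g', h]
    · simp [g', h, (hμg.label _ h).2]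

theorem exists_isIndependentRep_of_graph [DecidableEq X] (hpos : ∀ z, 0 ≤ p z) (hsum : ∑ z, p z = 1)
    (hpX : ∀ x, pX x = ∑ y, p (x, y)) {f : Y → X} (hf : ∀ x y, p (x, y) ≠ 0 → f y = x) :
    ∃ (ν : Y → ℝ) (G : X → Y → Y), IsIndependentRep p pX ν G ∧
      ∀ x y, p (x, y) ≠ 0 → G x y = y := by
  obtain ⟨μ, g, hμg, hμp, hdiag⟩ := exists_isIndependentRep hpos hsum hpX
  -- a cell of positive mass is a support point `(f y, y)`, so it is determined by `y`
  have hgraph : ∀ F : X × Y → ℝ, (∀ c, F c ≠ 0 → μ c ≠ 0) → ∑ c, F c = ∑ y, F (f y, y) :=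
    fun F hF => sum_eq_sum_graph F f fun c hc => hf c.1 c.2 (hμp c (hF c hc))
  refine ⟨fun y => μ (f y, y), fun x y => g x (f y, y), ⟨fun y => hμg.nonneg _, ?_, fun x y => ?_⟩,
    fun x y hxy => by simp [hf x y hxy, hdiag x y hxy]⟩
  · rw [← hgraph μ fun _ => id, hμg.sum_eq_one]
  · rw [← hgraph (fun c => if g x c = y then μ c else 0) fun c hc h => hc (by simp [h]),
      hμg.mul_sum_eq]

theorem exists_fin_infoUX_eq_of_isIndependentRep {U : Type*} [Fintype U] [DecidableEq U]
    (hpos : ∀ z, 0 ≤ p z) (hsum : ∑ z, p z = 1) (hpX : ∀ x, pX x = ∑ y, p (x, y))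
    {pY : Y → ℝ} (hpY : ∀ y, pY y = ∑ x, p (x, y)) {ε : ℝ} (hε0 : 0 ≤ ε)
    (hεI : ε < ent pX + ent pY - ent p) {ν : U → ℝ} {G : X → U → Y}
    (hν : IsIndependentRep p pX ν G) {κ : X × Y → U} {h : U → Y} (hκ : ∀ z, h (κ z) = z.2)
    (hG : ∀ x y, p (x, y) ≠ 0 → G x (κ (x, y)) = y) :
    ∃ q : X × Y × Fin (Fintype.card U) → ℝ, (∀ z, 0 ≤ q z) ∧ ∑ z, q z = 1 ∧
      (∀ x y, ∑ u, q (x, y, u) = p (x, y)) ∧ infoUX pX q = ε ∧ ent q - ent (margXU q) = 0 := by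
  have hpX0 : ∀ x, 0 ≤ pX x := fun x => hpX x ▸ sum_nonneg fun y _ => hpos _
  have hpX1 : ∑ x, pX x = 1 := by simp_rw [hpX, ← hsum, Fintype.sum_prod_type]
  obtain ⟨q, hq, hqε⟩ := exists_isFunctionalRep_infoUX_eq (hν.isFunctionalRep hpX0)
    (isFunctionalRep_copyRep hpos hG) pX (by rw [infoUX_indepRep G hpX1 hν.sum_eq_one]; exact hε0)
    (hεI.le.trans (le_infoUX_copyRep hpos pX hpY hκ))
  obtain ⟨q', h0, h1, h2, h3, h4⟩ := hq.exists_fin hsum pX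
  exact ⟨q', h0, h1, h2, h3.trans hqε, h4⟩

end Main

theorem mul_le_mul_sub_one_add_one_mul_add_one (a b : ℕ) :
    a * b ≤ (a * (b - 1) + 1) * (a + 1) := by
  rcases b with _ | b
  · simp
  · simp only [Nat.add_sub_cancel]
    nlinarith [Nat.zero_le (a * a * b)]

theorem le_sub_add_one_mul_add_one (a b : ℕ) : b ≤ (b - a + 1) * (a + 1) := by
  have : b ≤ b - a + a := by omega
  nlinarith [Nat.zero_le ((b - a) * a)]

end ExtendedFRL

end

open ExtendedFRL

/-- Extended Functional Representation Lemma with cardinality bound: for `0 ≤ ε < I(X;Y)`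
there exists `U` with `I(U;X) = ε`, `H(Y|U,X) = 0` and
`|𝒰| ≤ (|𝒳|(|𝒴|−1)+1)(|𝒳|+1)`; moreover, if `X` is a deterministic function of `Y`, `U` can be
chosen with `|𝒰| ≤ (|𝒴|−|𝒳|+1)(|𝒳|+1)`. -/
theorem stmt10 {X Y : Type*} [Fintype X] [Fintype Y]
    (p : X × Y → ℝ) (hpos : ∀ z, 0 ≤ p z) (hsum : ∑ z, p z = 1)
    (pX : X → ℝ) (hpX : ∀ x, pX x = ∑ y, p (x, y))
    (pY : Y → ℝ) (hpY : ∀ y, pY y = ∑ x, p (x, y))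
    (ε : ℝ) (hε0 : 0 ≤ ε)
    -- ε < I(X;Y)
    (hεI : ε < ent pX + ent pY - ent p) :
    (∃ (n : ℕ) (q : X × Y × Fin n → ℝ),
      (∀ z, 0 ≤ q z) ∧ (∑ z, q z = 1) ∧
      (∀ x y, (∑ u, q (x, y, u)) = p (x, y)) ∧
      -- I(U;X) = ε
      (ent (fun u => ∑ x, ∑ y, q (x, y, u))
        + ent pX
        - ent (fun xu : X × Fin n => ∑ y, q (xu.1, y, xu.2)) = ε) ∧
      -- H(Y|U,X) = 0
      (ent q - ent (fun xu : X × Fin n => ∑ y, q (xu.1, y, xu.2)) = 0) ∧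
      n ≤ (Fintype.card X * (Fintype.card Y - 1) + 1) * (Fintype.card X + 1)) ∧
    -- moreover, if X is a deterministic function of Y:
    ((∃ f : Y → X, ∀ x y, p (x, y) ≠ 0 → f y = x) →
      ∃ (n : ℕ) (q : X × Y × Fin n → ℝ),
        (∀ z, 0 ≤ q z) ∧ (∑ z, q z = 1) ∧
        (∀ x y, (∑ u, q (x, y, u)) = p (x, y)) ∧
        (ent (fun u => ∑ x, ∑ y, q (x, y, u))
          + ent pX
          - ent (fun xu : X × Fin n => ∑ y, q (xu.1, y, xu.2)) = ε) ∧
        (ent q - ent (fun xu : X × Fin n => ∑ y, q (xu.1, y, xu.2)) = 0) ∧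
        n ≤ (Fintype.card Y - Fintype.card X + 1) * (Fintype.card X + 1)) := by
  classical
  refine ⟨?_, fun ⟨f, hf⟩ => ?_⟩
  · obtain ⟨μ, g, hμg, -, hdiag⟩ := exists_isIndependentRep hpos hsum hpX
    obtain ⟨q, h0, h1, h2, h3, h4⟩ := exists_fin_infoUX_eq_of_isIndependentRep hpos hsum hpX hpY
      hε0 hεI hμg (κ := id) (h := Prod.snd) (fun _ => rfl) hdiag
    exact ⟨_, q, h0, h1, h2, h3, h4,
      Fintype.card_prod X Y ▸ mul_le_mul_sub_one_add_one_mul_add_one _ _⟩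
  · obtain ⟨ν, G, hν, hdiag⟩ := exists_isIndependentRep_of_graph hpos hsum hpX hf
    obtain ⟨q, h0, h1, h2, h3, h4⟩ := exists_fin_infoUX_eq_of_isIndependentRep hpos hsum hpX hpY
      hε0 hεI hν (κ := Prod.snd) (h := id) (fun _ => rfl) hdiag
    exact ⟨_, q, h0, h1, h2, h3, h4, le_sub_add_one_mul_add_one _ _⟩
end
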